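/- arXiv:1403.7662 — 2 statements merged into one kernel-verified Lean document; each statement's English description precedes it below -/
import Mathlib

section
/- Let $F$ be a finite extension of $\mathbb{Q}_p$ with ring of integers $\mathfrak{o}$, residue field of order $q$, $e = \mathrm{ord}(2)$, and let $\alpha_\psi$ be the Weil constant associated to an additive character $\psi$ of $F$ with conductor $\mathfrak{d}^{-1} = (\boldsymbol\delta^{-1})$, characterized by $\alpha_\psi(a) = |2a\boldsymbol\delta|^{-1/2} \int_{\mathfrak{o}} \psi(t^2/(4a\boldsymbol\delta^2))\, dt$ for nonzero $a \in \mathfrak{d}^{-1}\mathfrak{o}$ with this integral formula valid. Then $\int_{\mathfrak{o}^\times} \alpha_\psi(t/\boldsymbol\delta)\, dt = q^{-e/2}(1 - q^{-1})$ and $\int_{\mathfrak{o}^\times} \alpha_\psi(\varpi t/\boldsymbol\delta)\, dt = 0$. -/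
/-!
Every integrand occurring here is constant on the cosets of `𝔭^M`, `M = 2e + 1`, inside `𝔬`, and
`𝔬 / 𝔭^M` is finite, so an integral over a union of such cosets is `q^{-M}` times a finite sum
over coset representatives. This yields Fubini, and the invariance of `∫_{𝔬^×}` under `t ↦ t⁻¹`
and of `∫_{𝔭^j}` under translations, without any measurability of the field operations.

Writing `α_ψ(wt/δ)` by its defining integral and exchanging the integrals, the inner integral
becomes `∫_{𝔬^×} ψ(ct) dt` with `c = x²/(4wδ)`, which is `1 - q⁻¹`, `-q⁻¹` or `0` according as
`ord c ≥ -ord δ`, `ord c = -ord δ - 1` or smaller. For `w = 1` both conditions mean `x ∈ 𝔭^e`; for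
`w = ϖ` they mean `x ∈ 𝔭^{e+1}` resp. `x ∈ 𝔭^e`. Integrating over `x ∈ 𝔬` gives
`q^{e/2} q^{-e} (1 - q⁻¹)` and `q^{(e+1)/2} q^{-e} (q⁻¹ - q⁻¹) = 0`.
-/

open MeasureTheory Set

theorem MeasureTheory.NullMeasurableSet.of_add_measure_sdiff_le {X : Type*} [MeasurableSpace X]
    {μ : Measure X} {s t : Set X} (ht : MeasurableSet t) (hμt : μ t ≠ ⊤)
    (h : μ s + μ (t \ s) ≤ μ t) : NullMeasurableSet s μ := by
  set K := t \ toMeasurable μ (t \ s)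
  have hK : MeasurableSet K := ht.diff (measurableSet_toMeasurable _ _)
  have hKs : K ⊆ s := fun x hx => by_contra fun hxs => hx.2 (subset_toMeasurable _ _ ⟨hx.1, hxs⟩)
  have hfin : μ (t \ s) ≠ ⊤ := ne_top_of_le_ne_top hμt (measure_mono sdiff_subset)
  have hsK : μ s ≤ μ K := by
    have hcover : μ t ≤ μ K + μ (t \ s) := by
      rw [← measure_toMeasurable (t \ s)]
      refine (measure_mono fun x hx => ?_).trans (measure_union_le _ _)
      by_cases hx' : x ∈ toMeasurable μ (t \ s)
      · exact Or.inr hx'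
      · exact Or.inl ⟨hx, hx'⟩
    exact (ENNReal.add_le_add_iff_right hfin).1 (h.trans hcover)
  have hnull : μ (s \ K) = 0 := by
    refine measure_mono_null (sdiff_subset_sdiff_left (subset_toMeasurable μ s)) ?_
    rw [measure_sdiff (hKs.trans (subset_toMeasurable _ _)) hK.nullMeasurableSet
      (ne_top_of_le_ne_top hμt (measure_mono sdiff_subset)), measure_toMeasurable]
    exact tsub_eq_zero_of_le hsK
  exact hK.nullMeasurableSet.congr (ae_eq_set.2 ⟨by simp [sdiff_eq_empty.2 hKs], hnull⟩)

section CosetIntegral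

variable {A : Type*} [AddCommGroup A]

namespace QuotientAddGroup

variable {H : AddSubgroup A} {E : Set A}

theorem preimage_mk_singleton_mk (H : AddSubgroup A) (r : A) :
    ((↑) : A → A ⧸ H) ⁻¹' {(r : A ⧸ H)} = (-r + ·) ⁻¹' H := by
  ext x
  simp only [mem_preimage, mem_singleton_iff, QuotientAddGroup.eq, SetLike.mem_coe]
  rw [← neg_mem_iff, neg_add, neg_neg, add_comm]

theorem apply_out_mk {β : Type*} {f : A → β} (hf : ∀ x ∈ E, ∀ h ∈ H, f (x + h) = f x)
    {x : A} (hx : x ∈ E) : f (x : A ⧸ H).out = f x := by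
  obtain ⟨⟨h, hh⟩, he⟩ := mk_out_eq_add H x
  rw [he, hf x hx h hh]

theorem out_mem_of_mem_image (hE : ∀ x ∈ E, ∀ h ∈ H, x + h ∈ E) {C : A ⧸ H}
    (hC : C ∈ ((↑) : A → A ⧸ H) '' E) : C.out ∈ E := by
  obtain ⟨x, hx, rfl⟩ := hC
  obtain ⟨⟨h, hh⟩, he⟩ := mk_out_eq_add H x
  exact he ▸ hE x hx h hh

theorem eq_iUnion_preimage_mk (hE : ∀ x ∈ E, ∀ h ∈ H, x + h ∈ E) :
    E = ⋃ C : ((↑) : A → A ⧸ H) '' E, ((↑) : A → A ⧸ H) ⁻¹' {(C : A ⧸ H)} := by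
  ext x
  simp only [mem_iUnion, mem_preimage, mem_singleton_iff, Subtype.exists, exists_prop,
    exists_eq_right']
  refine ⟨fun hx => ⟨x, hx, rfl⟩, ?_⟩
  rintro ⟨y, hy, hyx⟩
  simpa using hE y hy _ (QuotientAddGroup.eq.1 hyx)

theorem eqOn_preimage_mk (hE : ∀ x ∈ E, ∀ h ∈ H, x + h ∈ E) {β : Type*} {f : A → β}
    (hf : ∀ x ∈ E, ∀ h ∈ H, f (x + h) = f x) (C : ((↑) : A → A ⧸ H) '' E) :
    EqOn f (fun _ => f (C : A ⧸ H).out) (((↑) : A → A ⧸ H) ⁻¹' {(C : A ⧸ H)}) := by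
  intro x hx
  rw [← show ((x : A ⧸ H)) = C from hx]
  exact (apply_out_mk hf ((eq_iUnion_preimage_mk hE).symm ▸ mem_iUnion.2 ⟨C, hx⟩)).symm

end QuotientAddGroup

open QuotientAddGroup (apply_out_mk out_mem_of_mem_image eq_iUnion_preimage_mk eqOn_preimage_mk)

variable [MeasurableSpace A]

/-- Addition is not assumed to be measurable, so translates of measurable sets need not be
measurable and invariance is asked of the outer measure. -/
def IsTranslationInvariant (μ : Measure A) : Prop :=
  ∀ (a : A) (s : Set A), MeasurableSet s → μ ((a + ·) ⁻¹' s) = μ s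

structure IsVolumePair (μ : Measure A) (H G : AddSubgroup A) : Prop where
  translationInvariant : IsTranslationInvariant μ
  measurableSet_left : MeasurableSet (H : Set A)
  measurableSet_right : MeasurableSet (G : Set A)
  le : H ≤ G
  measure_left_ne_zero : μ H ≠ 0
  measure_right_ne_top : μ G ≠ ⊤

namespace IsVolumePair

variable {μ : Measure A} {H G : AddSubgroup A} {V : Type*} [NormedAddCommGroup V]

theorem measure_preimage_mk (hp : IsVolumePair μ H G) (C : A ⧸ H) :
    μ (((↑) : A → A ⧸ H) ⁻¹' {C}) = μ H := by
  obtain ⟨r, rfl⟩ := QuotientAddGroup.mk_surjective C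
  rw [QuotientAddGroup.preimage_mk_singleton_mk]
  exact hp.translationInvariant _ _ hp.measurableSet_left

theorem measure_left_ne_top (hp : IsVolumePair μ H G) : μ H ≠ ⊤ :=
  ne_top_of_le_ne_top hp.measure_right_ne_top (measure_mono hp.le)

theorem nullMeasurableSet_preimage_mk (hp : IsVolumePair μ H G) {r : A} (hr : r ∈ G) :
    NullMeasurableSet (((↑) : A → A ⧸ H) ⁻¹' {(r : A ⧸ H)}) μ := by
  refine .of_add_measure_sdiff_le hp.measurableSet_right hp.measure_right_ne_top ?_
  have hsdiff : (G : Set A) \ ((↑) : A → A ⧸ H) ⁻¹' {(r : A ⧸ H)} = (-r + ·) ⁻¹' (G \ H) := by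
    rw [QuotientAddGroup.preimage_mk_singleton_mk]
    ext x
    simp only [mem_sdiff, mem_preimage, SetLike.mem_coe, G.add_mem_cancel_left (G.neg_mem hr)]
  rw [hp.measure_preimage_mk, hsdiff,
    hp.translationInvariant _ _ (hp.measurableSet_right.diff hp.measurableSet_left),
    measure_add_sdiff hp.measurableSet_left.nullMeasurableSet, union_eq_self_of_subset_left hp.le]

theorem nullMeasurableSet_preimage_mk_of_mem_image (hp : IsVolumePair μ H G) {E : Set A}
    (hEG : E ⊆ G) (C : ((↑) : A → A ⧸ H) '' E) :
    NullMeasurableSet (((↑) : A → A ⧸ H) ⁻¹' {(C : A ⧸ H)}) μ := by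
  obtain ⟨_, r, hr, rfl⟩ := C
  exact hp.nullMeasurableSet_preimage_mk (hEG hr)

theorem finite_image_mk (hp : IsVolumePair μ H G) : (((↑) : A → A ⧸ H) '' G).Finite := by
  let coset (C : A ⧸ H) : Set A := (((↑) : A → A ⧸ H) ⁻¹' {C}) ∩ G
  have hcoset : ∀ r ∈ G, coset r = ((↑) : A → A ⧸ H) ⁻¹' {(r : A ⧸ H)} := fun r hr =>
    inter_eq_left.2 fun x hx => by
      obtain ⟨h, hh, rfl⟩ : ∃ h ∈ H, r + h = x := ⟨-r + x, QuotientAddGroup.eq.1 hx.symm, by abel⟩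
      exact G.add_mem hr (hp.le hh)
  have hnull : ∀ C, NullMeasurableSet (coset C) μ := by
    intro C
    by_cases hC : ∃ r ∈ G, (r : A ⧸ H) = C
    · obtain ⟨r, hr, rfl⟩ := hC
      exact hcoset r hr ▸ hp.nullMeasurableSet_preimage_mk hr
    · convert nullMeasurableSet_empty
      exact eq_empty_of_forall_notMem fun x hx => hC ⟨x, hx.2, hx.1⟩
  have hdisj : Pairwise (Function.onFun (AEDisjoint μ) coset) := fun C D hCD =>
    (Disjoint.mono inter_subset_left inter_subset_left
      ((disjoint_singleton.2 hCD).preimage _)).aedisjoint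
  refine (Measure.finite_const_le_meas_of_disjoint_iUnion₀ μ
    (pos_iff_ne_zero.2 hp.measure_left_ne_zero) hnull hdisj ?_).subset ?_
  · exact ne_top_of_le_ne_top hp.measure_right_ne_top
      (measure_mono (iUnion_subset fun _ => inter_subset_right))
  · rintro _ ⟨r, hr, rfl⟩
    rw [mem_ofPred_eq, hcoset r hr, hp.measure_preimage_mk]

theorem integrableOn_of_forall_add_eq (hp : IsVolumePair μ H G) {E : Set A} (hEG : E ⊆ G)
    (hE : ∀ x ∈ E, ∀ h ∈ H, x + h ∈ E) {f : A → V} (hf : ∀ x ∈ E, ∀ h ∈ H, f (x + h) = f x) :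
    IntegrableOn f E μ := by
  have : Finite (((↑) : A → A ⧸ H) '' E) := hp.finite_image_mk.subset (image_mono hEG)
  rw [eq_iUnion_preimage_mk hE]
  refine integrableOn_finite_iUnion.2 fun C => (integrableOn_const ?_).congr_fun_ae
    ((ae_restrict_iff'₀ (hp.nullMeasurableSet_preimage_mk_of_mem_image hEG C)).2
      (ae_of_all _ fun x hx => (eqOn_preimage_mk hE hf C hx).symm))
  rw [hp.measure_preimage_mk]
  exact hp.measure_left_ne_top

theorem setIntegral_eq_finsum [NormedSpace ℝ V] [CompleteSpace V] (hp : IsVolumePair μ H G)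
    {E : Set A} (hEG : E ⊆ G) (hE : ∀ x ∈ E, ∀ h ∈ H, x + h ∈ E) {f : A → V}
    (hf : ∀ x ∈ E, ∀ h ∈ H, f (x + h) = f x) :
    ∫ x in E, f x ∂μ = μ.real H • ∑ᶠ C ∈ ((↑) : A → A ⧸ H) '' E, f C.out := by
  set S := ((↑) : A → A ⧸ H) '' E
  have : Fintype S := (hp.finite_image_mk.subset (image_mono hEG)).fintype
  have hnull := hp.nullMeasurableSet_preimage_mk_of_mem_image hEG
  have hint : ∀ C : S, ∫ x in ((↑) : A → A ⧸ H) ⁻¹' {(C : A ⧸ H)}, f x ∂μ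
      = μ.real H • f (C : A ⧸ H).out := fun C => by
    rw [setIntegral_congr_fun₀ (hnull C) (eqOn_preimage_mk hE hf C), setIntegral_const,
      measureReal_def, hp.measure_preimage_mk, ← measureReal_def]
  have hdisj : Pairwise (Function.onFun (AEDisjoint μ)
      fun C : S => ((↑) : A → A ⧸ H) ⁻¹' {(C : A ⧸ H)}) := fun C D hCD =>
    ((disjoint_singleton.2 (Subtype.coe_injective.ne hCD)).preimage _).aedisjoint
  have hfi := hp.integrableOn_of_forall_add_eq hEG hE hf
  rw [eq_iUnion_preimage_mk hE] at hfi ⊢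
  rw [integral_iUnion_ae hnull hdisj hfi, tsum_fintype, Finset.sum_congr rfl fun C _ => hint C,
    ← Finset.smul_sum, ← finsum_eq_sum_of_fintype]
  exact congrArg _ (finsum_set_coe_eq_finsum_mem (f := fun C : A ⧸ H => f C.out) S)

theorem setIntegral_setIntegral_comm [NormedSpace ℝ V] [CompleteSpace V]
    (hp : IsVolumePair μ H G) {E₁ E₂ : Set A} (hE₁G : E₁ ⊆ G) (hE₂G : E₂ ⊆ G)
    (hE₁ : ∀ x ∈ E₁, ∀ h ∈ H, x + h ∈ E₁) (hE₂ : ∀ t ∈ E₂, ∀ h ∈ H, t + h ∈ E₂)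
    {f : A → A → V} (hf₁ : ∀ t ∈ E₂, ∀ x ∈ E₁, ∀ h ∈ H, f (x + h) t = f x t)
    (hf₂ : ∀ x ∈ E₁, ∀ t ∈ E₂, ∀ h ∈ H, f x (t + h) = f x t) :
    ∫ t in E₂, ∫ x in E₁, f x t ∂μ ∂μ = ∫ x in E₁, ∫ t in E₂, f x t ∂μ ∂μ := by
  set S₁ := ((↑) : A → A ⧸ H) '' E₁
  set S₂ := ((↑) : A → A ⧸ H) '' E₂
  have hS₁ : S₁.Finite := hp.finite_image_mk.subset (image_mono hE₁G)
  have hS₂ : S₂.Finite := hp.finite_image_mk.subset (image_mono hE₂G)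
  have hout₁ : ∀ C ∈ S₁, C.out ∈ E₁ := fun C hC => out_mem_of_mem_image hE₁ hC
  have hout₂ : ∀ D ∈ S₂, D.out ∈ E₂ := fun D hD => out_mem_of_mem_image hE₂ hD
  have inner₁ : ∀ t ∈ E₂, ∫ x in E₁, f x t ∂μ = μ.real H • ∑ᶠ C ∈ S₁, f C.out t :=
    fun t ht => hp.setIntegral_eq_finsum hE₁G hE₁ (hf₁ t ht)
  have inner₂ : ∀ x ∈ E₁, ∫ t in E₂, f x t ∂μ = μ.real H • ∑ᶠ D ∈ S₂, f x D.out :=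
    fun x hx => hp.setIntegral_eq_finsum hE₂G hE₂ (hf₂ x hx)
  rw [hp.setIntegral_eq_finsum hE₂G hE₂ fun t ht h hh => by
      rw [inner₁ t ht, inner₁ _ (hE₂ t ht h hh)]
      exact congrArg _ (finsum_mem_congr rfl fun C hC => hf₂ _ (hout₁ C hC) t ht h hh),
    hp.setIntegral_eq_finsum hE₁G hE₁ fun x hx h hh => by
      rw [inner₂ x hx, inner₂ _ (hE₁ x hx h hh)]
      exact congrArg _ (finsum_mem_congr rfl fun D hD => hf₁ _ (hout₂ D hD) x hx h hh),
    finsum_mem_congr rfl fun D hD => inner₁ _ (hout₂ D hD),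
    finsum_mem_congr rfl fun C hC => inner₂ _ (hout₁ C hC),
    ← smul_finsum_mem hS₂, ← smul_finsum_mem hS₁, finsum_mem_comm _ hS₂ hS₁]

theorem setIntegral_comp_eq [NormedSpace ℝ V] [CompleteSpace V] (hp : IsVolumePair μ H G)
    {E : Set A} (hEG : E ⊆ G) (hE : ∀ x ∈ E, ∀ h ∈ H, x + h ∈ E) {φ φ' : A → A}
    (hφ : MapsTo φ E E) (hφ' : MapsTo φ' E E) (hinv : InvOn φ' φ E E)
    (hφH : ∀ x ∈ E, ∀ h ∈ H, (φ (x + h) : A ⧸ H) = φ x)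
    (hφ'H : ∀ x ∈ E, ∀ h ∈ H, (φ' (x + h) : A ⧸ H) = φ' x)
    {f : A → V} (hf : ∀ x ∈ E, ∀ h ∈ H, f (x + h) = f x) :
    ∫ x in E, f (φ x) ∂μ = ∫ x in E, f x ∂μ := by
  have hfφ : ∀ x ∈ E, ∀ h ∈ H, f (φ (x + h)) = f (φ x) := fun x hx h hh => by
    rw [← apply_out_mk hf (hφ (hE x hx h hh)), hφH x hx h hh, apply_out_mk hf (hφ hx)]
  have hout : ∀ C ∈ ((↑) : A → A ⧸ H) '' E, C.out ∈ E := fun C hC => out_mem_of_mem_image hE hC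
  rw [hp.setIntegral_eq_finsum hEG hE hfφ, hp.setIntegral_eq_finsum hEG hE hf]
  refine congrArg _ (finsum_mem_eq_of_bijOn (fun C => ((φ C.out : A) : A ⧸ H))
    (InvOn.bijOn (f' := fun C => ((φ' C.out : A) : A ⧸ H)) ⟨fun C hC => ?_, fun C hC => ?_⟩
      (fun C hC => mem_image_of_mem _ (hφ (hout C hC)))
      (fun C hC => mem_image_of_mem _ (hφ' (hout C hC))))
    fun C hC => (apply_out_mk hf (hφ (hout C hC))).symm)
  · dsimp only
    rw [apply_out_mk (f := fun x => ((φ' x : A) : A ⧸ H)) hφ'H (hφ (hout C hC)),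
      hinv.1 (hout C hC), QuotientAddGroup.out_eq']
  · dsimp only
    rw [apply_out_mk (f := fun x => ((φ x : A) : A ⧸ H)) hφH (hφ' (hout C hC)),
      hinv.2 (hout C hC), QuotientAddGroup.out_eq']

open Classical in
theorem setIntegral_addChar (hp : IsVolumePair μ H G) {K : AddSubgroup A}
    (hK : MeasurableSet (K : Set A)) (hHK : H ≤ K) (hKG : K ≤ G) {χ : A → ℂ}
    (hχ : ∀ x y, χ (x + y) = χ x * χ y) (hχH : ∀ h ∈ H, χ h = 1) :
    ∫ x in K, χ x ∂μ = if ∀ k ∈ K, χ k = 1 then (μ.real K : ℂ) else 0 := by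
  split_ifs with htriv
  · rw [setIntegral_congr_fun hK htriv, setIntegral_const, Complex.real_smul, mul_one]
  push Not at htriv
  obtain ⟨g, hg, hχg⟩ := htriv
  have hshift : ∫ x in K, χ (x + g) ∂μ = ∫ x in K, χ x ∂μ :=
    hp.setIntegral_comp_eq hKG (fun x hx h hh => K.add_mem hx (hHK hh))
      (fun x hx => K.add_mem hx hg) (fun x hx => K.sub_mem hx hg)
      ⟨fun x _ => add_sub_cancel_right x g, fun x _ => sub_add_cancel x g⟩
      (fun x _ h hh => QuotientAddGroup.eq.2 (by convert H.neg_mem hh using 1; abel))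
      (fun x _ h hh => QuotientAddGroup.eq.2 (by convert H.neg_mem hh using 1; abel))
      (fun x _ h hh => by rw [hχ, hχH h hh, mul_one])
  simp_rw [hχ _ g, integral_mul_const] at hshift
  have hzero : (∫ x in K, χ x ∂μ) * (χ g - 1) = 0 := by linear_combination hshift
  exact (mul_eq_zero.1 hzero).resolve_right (sub_ne_zero.2 hχg)

end IsVolumePair

end CosetIntegral

section Ord

variable {F : Type*} [Field F]

structure IsOrd (ord : F → ℤ) : Prop where
  map_mul : ∀ x y : F, x ≠ 0 → y ≠ 0 → ord (x * y) = ord x + ord y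
  min_le_map_add : ∀ x y : F, x ≠ 0 → y ≠ 0 → x + y ≠ 0 → min (ord x) (ord y) ≤ ord (x + y)

namespace IsOrd

variable {ord : F → ℤ} {m n : ℤ} {x y : F}

theorem map_one (hv : IsOrd ord) : ord 1 = 0 := by
  have := hv.map_mul 1 1 one_ne_zero one_ne_zero
  rw [one_mul] at this
  omega

theorem map_neg (hv : IsOrd ord) (x : F) : ord (-x) = ord x := by
  rcases eq_or_ne x 0 with rfl | hx
  · rw [neg_zero]
  have h := hv.map_mul (-1) (-1) (by simp) (by simp)
  rw [neg_one_mul, neg_neg, hv.map_one] at h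
  rw [← neg_one_mul, hv.map_mul _ _ (by simp) hx]
  omega

theorem map_inv (hv : IsOrd ord) (hx : x ≠ 0) : ord x⁻¹ = -ord x := by
  have := hv.map_mul x x⁻¹ hx (inv_ne_zero hx)
  rw [mul_inv_cancel₀ hx, hv.map_one] at this
  omega

theorem map_div (hv : IsOrd ord) (hx : x ≠ 0) (hy : y ≠ 0) : ord (x / y) = ord x - ord y := by
  rw [div_eq_mul_inv, hv.map_mul _ _ hx (inv_ne_zero hy), hv.map_inv hy, sub_eq_add_neg]

def ball (hv : IsOrd ord) (n : ℤ) : AddSubgroup F where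
  carrier := {x | x = 0 ∨ n ≤ ord x}
  zero_mem' := Or.inl rfl
  add_mem' {x y} hx hy := by
    rcases eq_or_ne x 0 with rfl | hx0
    · rwa [zero_add]
    rcases eq_or_ne y 0 with rfl | hy0
    · rwa [add_zero]
    rcases eq_or_ne (x + y) 0 with hxy | hxy
    · exact Or.inl hxy
    exact Or.inr ((le_min (hx.resolve_left hx0) (hy.resolve_left hy0)).trans
      (hv.min_le_map_add x y hx0 hy0 hxy))
  neg_mem' {x} hx := by
    rcases hx with rfl | hx
    · exact Or.inl neg_zero
    · exact Or.inr (hv.map_neg x ▸ hx)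

theorem mem_ball (hv : IsOrd ord) : x ∈ hv.ball n ↔ x = 0 ∨ n ≤ ord x := Iff.rfl

theorem ball_anti (hv : IsOrd ord) (h : m ≤ n) : hv.ball n ≤ hv.ball m :=
  fun _ hx => hx.imp_right h.trans

theorem mem_ball_map (hv : IsOrd ord) (x : F) : x ∈ hv.ball (ord x) := Or.inr le_rfl

theorem mul_mem_ball (hv : IsOrd ord) (hx : x ∈ hv.ball m) (hy : y ∈ hv.ball n) :
    x * y ∈ hv.ball (m + n) := by
  rcases eq_or_ne x 0 with rfl | hx0
  · exact Or.inl (zero_mul y)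
  rcases eq_or_ne y 0 with rfl | hy0
  · exact Or.inl (mul_zero x)
  rw [mem_ball, hv.map_mul x y hx0 hy0]
  exact Or.inr (add_le_add (hx.resolve_left hx0) (hy.resolve_left hy0))

theorem sq_mul_mem_ball_iff (hv : IsOrd ord) {a : F} (ha : a ≠ 0) (h₁ : n - ord a ≤ 2 * m)
    (h₂ : 2 * m ≤ n - ord a + 1) : x ^ 2 * a ∈ hv.ball n ↔ x ∈ hv.ball m := by
  rcases eq_or_ne x 0 with rfl | hx
  · rw [zero_pow two_ne_zero, zero_mul]
    exact iff_of_true (hv.ball n).zero_mem (hv.ball m).zero_mem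
  rw [mem_ball, mem_ball, hv.map_mul _ _ (pow_ne_zero 2 hx) ha, sq, hv.map_mul x x hx hx,
    or_iff_right (mul_ne_zero (mul_ne_zero hx hx) ha), or_iff_right hx]
  omega

theorem indicator_ball_sq_mul (hv : IsOrd ord) {a : F} (ha : a ≠ 0) (h₁ : n - ord a ≤ 2 * m)
    (h₂ : 2 * m ≤ n - ord a + 1) {β : Type*} [Zero β] (c : β) (x : F) :
    (hv.ball n : Set F).indicator (fun _ => c) (x ^ 2 * a)
      = (hv.ball m : Set F).indicator (fun _ => c) x := by
  have hiff := hv.sq_mul_mem_ball_iff (x := x) ha h₁ h₂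
  by_cases hx : x ∈ hv.ball m
  · rw [indicator_of_mem (hiff.2 hx), indicator_of_mem hx]
  · rw [indicator_of_notMem (mt hiff.1 hx), indicator_of_notMem hx]

theorem setOf_ne_zero_and_eq_zero (hv : IsOrd ord) :
    {x : F | x ≠ 0 ∧ ord x = 0} = (hv.ball 0 : Set F) \ hv.ball 1 := by
  ext x
  rcases eq_or_ne x 0 with rfl | hx
  · simp [(hv.ball 1).zero_mem]
  simp only [mem_ofPred_eq, mem_sdiff, SetLike.mem_coe, mem_ball, hx, false_or, ne_eq,
    not_false_eq_true, true_and]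
  omega

theorem add_mem_units (hv : IsOrd ord) {M : ℤ} (hM : 1 ≤ M) {h : F}
    (hx : x ∈ (hv.ball 0 : Set F) \ hv.ball 1) (hh : h ∈ hv.ball M) :
    x + h ∈ (hv.ball 0 : Set F) \ hv.ball 1 := by
  have hh1 := hv.ball_anti hM hh
  exact ⟨(hv.ball 0).add_mem hx.1 (hv.ball_anti zero_le_one hh1),
    fun hxh => hx.2 (by simpa using (hv.ball 1).sub_mem hxh hh1)⟩

theorem inv_mem_units (hv : IsOrd ord) (hx : x ∈ (hv.ball 0 : Set F) \ hv.ball 1) :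
    x⁻¹ ∈ (hv.ball 0 : Set F) \ hv.ball 1 := by
  rw [← hv.setOf_ne_zero_and_eq_zero] at hx ⊢
  exact ⟨inv_ne_zero hx.1, by rw [hv.map_inv hx.1, hx.2, neg_zero]⟩

theorem mk_inv_add_eq (hv : IsOrd ord) {M : ℤ} (hM : 1 ≤ M) {h : F}
    (hx : x ∈ (hv.ball 0 : Set F) \ hv.ball 1) (hh : h ∈ hv.ball M) :
    (((x + h)⁻¹ : F) : F ⧸ hv.ball M) = (x⁻¹ : F) := by
  have hxh := hv.add_mem_units hM hx hh
  have hx0 : x ≠ 0 := ((hv.setOf_ne_zero_and_eq_zero).symm ▸ hx : _).1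
  have hxh0 : x + h ≠ 0 := ((hv.setOf_ne_zero_and_eq_zero).symm ▸ hxh : _).1
  have key : -(x + h)⁻¹ + x⁻¹ = h * (x⁻¹ * (x + h)⁻¹) := by
    field_simp
    ring
  rw [QuotientAddGroup.eq, key]
  simpa using hv.mul_mem_ball hh (hv.mul_mem_ball (hv.inv_mem_units hx).1 (hv.inv_mem_units hxh).1)

structure IsCharOfConductor (hv : IsOrd ord) (ψ : F → ℂ) (n : ℤ) : Prop where
  map_add : ∀ x y, ψ (x + y) = ψ x * ψ y
  map_eq_one : ∀ x ∈ hv.ball n, ψ x = 1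
  exists_ne_one : ∃ x, x ≠ 0 ∧ ord x = n - 1 ∧ ψ x ≠ 1

namespace IsCharOfConductor

variable {hv : IsOrd ord} {ψ : F → ℂ}

theorem map_add_of_mem (hψ : hv.IsCharOfConductor ψ n) (x : F) (hy : y ∈ hv.ball n) :
    ψ (x + y) = ψ x := by
  rw [hψ.map_add, hψ.map_eq_one y hy, mul_one]

theorem map_mul_add_of_mem (hψ : hv.IsCharOfConductor ψ n) {c : F} (hc : c ∈ hv.ball (n - m))
    (x : F) (hy : y ∈ hv.ball m) : ψ (c * (x + y)) = ψ (c * x) := by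
  rw [mul_add, hψ.map_add_of_mem _ (by simpa using hv.mul_mem_ball hc hy)]

theorem forall_mul_eq_one_iff (hψ : hv.IsCharOfConductor ψ n) {c : F} :
    (∀ t ∈ hv.ball m, ψ (c * t) = 1) ↔ c ∈ hv.ball (n - m) := by
  refine ⟨fun h => ?_, fun hc t ht => hψ.map_eq_one _ (by simpa using hv.mul_mem_ball hc ht)⟩
  by_contra hc
  obtain ⟨x₀, hx₀, hx₀ord, hψx₀⟩ := hψ.exists_ne_one
  have hc0 : c ≠ 0 := fun h0 => hc (h0 ▸ (hv.ball _).zero_mem)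
  have hcord : ord c < n - m := lt_of_not_ge fun h' => hc (Or.inr h')
  refine hψx₀ (mul_inv_cancel_left₀ hc0 x₀ ▸ h _ (Or.inr ?_))
  rw [hv.map_mul _ _ (inv_ne_zero hc0) hx₀, hv.map_inv hc0]
  omega

end IsCharOfConductor

structure IsNormalizedHaar [MeasurableSpace F] (hv : IsOrd ord) (μ : Measure F) (q : ℝ) :
    Prop where
  pos : 0 < q
  translationInvariant : IsTranslationInvariant μ
  measurableSet_ball : ∀ n : ℤ, MeasurableSet (hv.ball n : Set F)
  measure_ball : ∀ n : ℤ, μ (hv.ball n) = ENNReal.ofReal (q ^ (-n))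

namespace IsNormalizedHaar

variable [MeasurableSpace F] {hv : IsOrd ord} {μ : Measure F} {q : ℝ} {ψ : F → ℂ}

theorem measureReal_ball (hμ : hv.IsNormalizedHaar μ q) (n : ℤ) :
    μ.real (hv.ball n) = q ^ (-n) := by
  rw [measureReal_def, hμ.measure_ball, ENNReal.toReal_ofReal (zpow_pos hμ.pos _).le]

theorem isVolumePair (hμ : hv.IsNormalizedHaar μ q) {M : ℤ} (hM : 0 ≤ M) :
    IsVolumePair μ (hv.ball M) (hv.ball 0) where
  translationInvariant := hμ.translationInvariant
  measurableSet_left := hμ.measurableSet_ball M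
  measurableSet_right := hμ.measurableSet_ball 0
  le := hv.ball_anti hM
  measure_left_ne_zero := by simp [hμ.measure_ball, zpow_pos hμ.pos]
  measure_right_ne_top := by simp [hμ.measure_ball]

theorem integrableOn_indicator_ball (hμ : hv.IsNormalizedHaar μ q) (m : ℤ) (c : ℂ) :
    IntegrableOn ((hv.ball m : Set F).indicator fun _ => c) (hv.ball 0) μ :=
  (integrableOn_const (by simp [hμ.measure_ball])).indicator (hμ.measurableSet_ball m)

theorem setIntegral_indicator_ball (hμ : hv.IsNormalizedHaar μ q) (hm : 0 ≤ m) (c : ℂ) :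
    ∫ x in hv.ball 0, (hv.ball m : Set F).indicator (fun _ => c) x ∂μ
      = ((q ^ (-m) : ℝ) : ℂ) * c := by
  rw [setIntegral_indicator (hμ.measurableSet_ball m), inter_eq_right.2 (hv.ball_anti hm),
    setIntegral_const, hμ.measureReal_ball, Complex.real_smul]

theorem setIntegral_ball_mul (hμ : hv.IsNormalizedHaar μ q) (hψ : hv.IsCharOfConductor ψ n)
    {j M : ℤ} (hj : 0 ≤ j) (hjM : j ≤ M) {c : F} (hc : c ∈ hv.ball (n - M)) :
    ∫ t in hv.ball j, ψ (c * t) ∂μ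
      = (hv.ball (n - j) : Set F).indicator (fun _ => ((q ^ (-j) : ℝ) : ℂ)) c := by
  rw [(hμ.isVolumePair (hj.trans hjM)).setIntegral_addChar (hμ.measurableSet_ball j)
    (hv.ball_anti hjM) (hv.ball_anti hj) (χ := fun t => ψ (c * t))
    (fun x y => by rw [mul_add, hψ.map_add]) (hψ.forall_mul_eq_one_iff.2 hc)]
  by_cases h : c ∈ hv.ball (n - j)
  · rw [if_pos (hψ.forall_mul_eq_one_iff.2 h), indicator_of_mem h, hμ.measureReal_ball]
  · rw [if_neg (mt hψ.forall_mul_eq_one_iff.1 h), indicator_of_notMem h]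

theorem setIntegral_units_mul (hμ : hv.IsNormalizedHaar μ q) (hψ : hv.IsCharOfConductor ψ n)
    {M : ℤ} (hM : 1 ≤ M) {c : F} (hc : c ∈ hv.ball (n - M)) :
    ∫ t in (hv.ball 0 : Set F) \ hv.ball 1, ψ (c * t) ∂μ
      = (hv.ball n : Set F).indicator (fun _ => 1) c
        - (hv.ball (n - 1) : Set F).indicator (fun _ => (q⁻¹ : ℂ)) c := by
  have hp := hμ.isVolumePair (zero_le_one.trans hM)
  rw [setIntegral_sdiff (hμ.measurableSet_ball 1) (hp.integrableOn_of_forall_add_eq le_rfl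
      (fun x hx h hh => (hv.ball 0).add_mem hx (hp.le hh))
      (fun x _ h hh => hψ.map_mul_add_of_mem hc x hh)) (hv.ball_anti zero_le_one),
    hμ.setIntegral_ball_mul hψ le_rfl (zero_le_one.trans hM) hc,
    hμ.setIntegral_ball_mul hψ zero_le_one hM hc]
  simp

theorem setIntegral_units_mul_inv (hμ : hv.IsNormalizedHaar μ q) (hψ : hv.IsCharOfConductor ψ n)
    {M : ℤ} (hM : 1 ≤ M) {c : F} (hc : c ∈ hv.ball (n - M)) :
    ∫ t in (hv.ball 0 : Set F) \ hv.ball 1, ψ (c * t⁻¹) ∂μ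
      = ∫ t in (hv.ball 0 : Set F) \ hv.ball 1, ψ (c * t) ∂μ :=
  (hμ.isVolumePair (zero_le_one.trans hM)).setIntegral_comp_eq sdiff_subset
    (fun _ ht _ hh => hv.add_mem_units hM ht hh) (φ := Inv.inv) (φ' := Inv.inv)
    (fun _ => hv.inv_mem_units) (fun _ => hv.inv_mem_units)
    ⟨fun t _ => inv_inv t, fun t _ => inv_inv t⟩
    (fun _ ht _ hh => hv.mk_inv_add_eq hM ht hh) (fun _ ht _ hh => hv.mk_inv_add_eq hM ht hh)
    (f := fun t => ψ (c * t)) (fun t _ _ hh => hψ.map_mul_add_of_mem hc t hh)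

theorem setIntegral_units_setIntegral_sq_mul_inv (hμ : hv.IsNormalizedHaar μ q)
    (hψ : hv.IsCharOfConductor ψ n) {a : F} (ha : a ≠ 0) {e k : ℤ} (he : 0 ≤ e) (hk₀ : 0 ≤ k)
    (hk₁ : k ≤ 1) (hae : ord a = n - 2 * e - k) :
    ∫ t in (hv.ball 0 : Set F) \ hv.ball 1, ∫ x in hv.ball 0, ψ (x ^ 2 * a * t⁻¹) ∂μ ∂μ
      = ((q ^ (-e) * (q ^ (-k) - q⁻¹) : ℝ) : ℂ) := by
  -- `M = 2e + 1` makes the integrand constant in `x` and in `t` on the cosets of `ball M`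
  set M := 2 * e + 1
  set U := (hv.ball 0 : Set F) \ hv.ball 1
  have hM : 1 ≤ M := by omega
  have hp := hμ.isVolumePair (zero_le_one.trans hM)
  have h0sat : ∀ x ∈ (hv.ball 0 : Set F), ∀ h ∈ hv.ball M, x + h ∈ (hv.ball 0 : Set F) :=
    fun x hx h hh => (hv.ball 0).add_mem hx (hp.le hh)
  have haM : a ∈ hv.ball (n - M) := hv.ball_anti (by omega) (hv.mem_ball_map a)
  have hsq : ∀ x ∈ hv.ball 0, x ^ 2 * a ∈ hv.ball (n - M) := fun x hx => by
    simpa [sq] using hv.mul_mem_ball (hv.mul_mem_ball hx hx) haM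
  have hx_lc : ∀ t ∈ U, ∀ x ∈ (hv.ball 0 : Set F), ∀ h ∈ hv.ball M,
      ψ ((x + h) ^ 2 * a * t⁻¹) = ψ (x ^ 2 * a * t⁻¹) := by
    intro t ht x hx h hh
    have hat : a * t⁻¹ ∈ hv.ball (n - M) := by
      simpa using hv.mul_mem_ball haM (hv.inv_mem_units ht).1
    have hxxh : x + x + h ∈ hv.ball 0 := h0sat _ ((hv.ball 0).add_mem hx hx) h hh
    rw [show (x + h) ^ 2 * a * t⁻¹ = x ^ 2 * a * t⁻¹ + h * ((x + x + h) * (a * t⁻¹)) by ring,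
      hψ.map_add_of_mem _ (by simpa using hv.mul_mem_ball hh (hv.mul_mem_ball hxxh hat))]
  have ht_lc : ∀ x ∈ (hv.ball 0 : Set F), ∀ t ∈ U, ∀ h ∈ hv.ball M,
      ψ (x ^ 2 * a * (t + h)⁻¹) = ψ (x ^ 2 * a * t⁻¹) := by
    intro x hx t ht h hh
    have hinv := (hv.ball M).neg_mem (QuotientAddGroup.eq.1 (hv.mk_inv_add_eq hM ht hh))
    rw [show (t + h)⁻¹ = t⁻¹ + -(-(t + h)⁻¹ + t⁻¹) by ring,
      hψ.map_mul_add_of_mem (hsq x hx) _ hinv]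
  rw [hp.setIntegral_setIntegral_comm le_rfl sdiff_subset h0sat
      (fun t ht h hh => hv.add_mem_units hM ht hh) hx_lc ht_lc,
    setIntegral_congr_fun (hμ.measurableSet_ball 0) fun x hx => by
      rw [hμ.setIntegral_units_mul_inv hψ hM (hsq x hx), hμ.setIntegral_units_mul hψ hM (hsq x hx),
        hv.indicator_ball_sq_mul ha (m := e + k) (by omega) (by omega),
        hv.indicator_ball_sq_mul ha (m := e) (by omega) (by omega)],
    integral_sub (hμ.integrableOn_indicator_ball _ _) (hμ.integrableOn_indicator_ball _ _),
    hμ.setIntegral_indicator_ball (by omega), hμ.setIntegral_indicator_ball he, neg_add,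
    zpow_add₀ hμ.pos.ne']
  push_cast
  ring

theorem setIntegral_units_weil (hμ : hv.IsNormalizedHaar μ q) {δ : F} (hδ : δ ≠ 0)
    (hψ : hv.IsCharOfConductor ψ (-ord δ)) {e : ℕ} (h2 : (2 : F) ≠ 0)
    (he : (e : ℤ) = ord 2) {α : F → ℂ} (hα : ∀ a : F, a ≠ 0 → -(ord δ) ≤ ord a →
      α a = ((q ^ ((ord (2 * a * δ) : ℝ) / 2) : ℝ) : ℂ) *
        ∫ t in hv.ball 0, ψ (t ^ 2 / (4 * a * δ ^ 2)) ∂μ)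
    {w : F} (hw : w ≠ 0) {k : ℤ} (hwk : ord w = k) (hk₀ : 0 ≤ k) (hk₁ : k ≤ 1) :
    ∫ t in (hv.ball 0 : Set F) \ hv.ball 1, α (w * t / δ) ∂μ
      = ((q ^ (((e + k : ℤ) : ℝ) / 2) * q ^ (-(e : ℤ)) * (q ^ (-k) - q⁻¹) : ℝ) : ℂ) := by
  subst hwk
  have h4 : (4 : F) ≠ 0 := by simpa [← two_add_two_eq_four, ← two_mul] using mul_ne_zero h2 h2
  have h4wδ : 4 * w * δ ≠ 0 := mul_ne_zero (mul_ne_zero h4 hw) hδ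
  have hae : ord (4 * w * δ)⁻¹ = -ord δ - 2 * e - ord w := by
    rw [hv.map_inv h4wδ, hv.map_mul _ _ (mul_ne_zero h4 hw) hδ, hv.map_mul _ _ h4 hw,
      ← two_add_two_eq_four, ← two_mul, hv.map_mul _ _ h2 h2, ← he]
    ring
  have hαt : ∀ t ∈ (hv.ball 0 : Set F) \ hv.ball 1, α (w * t / δ) =
      ((q ^ (((e + ord w : ℤ) : ℝ) / 2) : ℝ) : ℂ) *
        ∫ x in hv.ball 0, ψ (x ^ 2 * (4 * w * δ)⁻¹ * t⁻¹) ∂μ := by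
    intro t ht
    rw [← hv.setOf_ne_zero_and_eq_zero] at ht
    obtain ⟨ht0, htord⟩ := ht
    have hwt : w * t ≠ 0 := mul_ne_zero hw ht0
    rw [hα _ (div_ne_zero hwt hδ) (by rw [hv.map_div hwt hδ, hv.map_mul _ _ hw ht0]; omega),
      show 2 * (w * t / δ) * δ = 2 * (w * t) by field_simp, hv.map_mul _ _ h2 hwt,
      hv.map_mul _ _ hw ht0, htord, ← he, add_zero]
    congr 2 with x
    congr 1
    field_simp
  rw [setIntegral_congr_fun ((hμ.measurableSet_ball 0).diff (hμ.measurableSet_ball 1)) hαt,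
    integral_const_mul, hμ.setIntegral_units_setIntegral_sq_mul_inv hψ (inv_ne_zero h4wδ)
      (Nat.cast_nonneg e) hk₀ hk₁ hae]
  push_cast
  ring

end IsNormalizedHaar

end IsOrd

end Ord

theorem statement_5_general
    (p : ℕ) [Fact p.Prime]
    (F : Type*) [Field F] [Algebra ℚ_[p] F]
    [MeasurableSpace F]
    (ord : F → ℤ)
    (hmul : ∀ x y : F, x ≠ 0 → y ≠ 0 → ord (x * y) = ord x + ord y)
    (hult : ∀ x y : F, x ≠ 0 → y ≠ 0 → x + y ≠ 0 → min (ord x) (ord y) ≤ ord (x + y))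
    (q : ℝ) (hq : 1 < q)
    (μ : Measure F)
    (hμtrans : ∀ (a : F) (s : Set F), MeasurableSet s → μ ((a + ·) ⁻¹' s) = μ s)
    (hμball : ∀ n : ℤ, μ {x : F | x = 0 ∨ n ≤ ord x} = ENNReal.ofReal (q ^ (-n)))
    (hmeasball : ∀ n : ℤ, MeasurableSet {x : F | x = 0 ∨ n ≤ ord x})
    (δ : F) (hδ : δ ≠ 0)
    (ψ : F → ℂ)
    (hψadd : ∀ x y : F, ψ (x + y) = ψ x * ψ y)
    (hψtriv : ∀ x : F, (x = 0 ∨ -(ord δ) ≤ ord x) → ψ x = 1)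
    (hψnontriv : ∃ x : F, x ≠ 0 ∧ ord x = -(ord δ) - 1 ∧ ψ x ≠ 1)
    (ϖ : F) (hϖ0 : ϖ ≠ 0) (hϖ : ord ϖ = 1)
    (e : ℕ) (he : (e : ℤ) = ord 2)
    (α : F → ℂ)
    -- the Weil-constant integral formula, valid for nonzero `a ∈ 𝔭^{-c_ψ}`:
    (hα : ∀ a : F, a ≠ 0 → -(ord δ) ≤ ord a →
        α a = ((q ^ ((ord (2 * a * δ) : ℝ) / 2) : ℝ) : ℂ) *
          ∫ t in {y : F | y = 0 ∨ 0 ≤ ord y}, ψ (t ^ 2 / (4 * a * δ ^ 2)) ∂μ) :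
    (∫ t in {x : F | x ≠ 0 ∧ ord x = 0}, α (t / δ) ∂μ =
        ((q ^ (-(e : ℝ) / 2) : ℝ) : ℂ) * (1 - (q : ℂ)⁻¹)) ∧
    (∫ t in {x : F | x ≠ 0 ∧ ord x = 0}, α (ϖ * t / δ) ∂μ = 0) := by
  have : CharZero F := charZero_of_injective_algebraMap (algebraMap ℚ_[p] F).injective
  have hv : IsOrd ord := ⟨hmul, hult⟩
  have hμ : hv.IsNormalizedHaar μ q := ⟨by linarith, hμtrans, hmeasball, hμball⟩
  have hψ : hv.IsCharOfConductor ψ (-ord δ) := ⟨hψadd, hψtriv, hψnontriv⟩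
  have hweil (w : F) := hμ.setIntegral_units_weil hδ hψ two_ne_zero he hα (w := w)
  rw [hv.setOf_ne_zero_and_eq_zero]
  constructor
  · have h1 := hweil 1 one_ne_zero hv.map_one le_rfl zero_le_one
    simp only [one_mul] at h1
    rw [h1, add_zero, neg_zero, zpow_zero, Int.cast_natCast, ← Real.rpow_intCast,
      ← Real.rpow_add hμ.pos]
    push_cast
    ring_nf
  · rw [hweil ϖ hϖ0 hϖ zero_le_one le_rfl, zpow_neg_one, sub_self, mul_zero, Complex.ofReal_zero]

theorem statement_5
    (p : ℕ) [Fact p.Prime]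
    (F : Type*) [Field F] [Algebra ℚ_[p] F] [FiniteDimensional ℚ_[p] F]
    [MeasurableSpace F]
    (ord : F → ℤ)
    (hmul : ∀ x y : F, x ≠ 0 → y ≠ 0 → ord (x * y) = ord x + ord y)
    (hult : ∀ x y : F, x ≠ 0 → y ≠ 0 → x + y ≠ 0 → min (ord x) (ord y) ≤ ord (x + y))
    (hsurj : Function.Surjective ord)
    (hcomp : 0 < ord (algebraMap ℚ_[p] F p))
    (q : ℝ) (hq : 1 < q)
    (μ : Measure F)
    (hμtrans : ∀ (a : F) (s : Set F), MeasurableSet s → μ ((a + ·) ⁻¹' s) = μ s)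
    (hμball : ∀ n : ℤ, μ {x : F | x = 0 ∨ n ≤ ord x} = ENNReal.ofReal (q ^ (-n)))
    (hmeasball : ∀ n : ℤ, MeasurableSet {x : F | x = 0 ∨ n ≤ ord x})
    (hmeasunits : MeasurableSet {x : F | x ≠ 0 ∧ ord x = 0})
    (δ : F) (hδ : δ ≠ 0)
    (ψ : F → ℂ) (hψmeas : Measurable ψ)
    (hψadd : ∀ x y : F, ψ (x + y) = ψ x * ψ y)
    (hψnorm : ∀ x : F, ‖ψ x‖ = 1)
    (hψtriv : ∀ x : F, (x = 0 ∨ -(ord δ) ≤ ord x) → ψ x = 1)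
    (hψnontriv : ∃ x : F, x ≠ 0 ∧ ord x = -(ord δ) - 1 ∧ ψ x ≠ 1)
    (ϖ : F) (hϖ0 : ϖ ≠ 0) (hϖ : ord ϖ = 1)
    (e : ℕ) (he : (e : ℤ) = ord 2)
    (α : F → ℂ) (hαmeas : Measurable α)
    -- the Weil-constant integral formula, valid for nonzero `a ∈ 𝔭^{-c_ψ}`:
    (hα : ∀ a : F, a ≠ 0 → -(ord δ) ≤ ord a →
        α a = ((q ^ ((ord (2 * a * δ) : ℝ) / 2) : ℝ) : ℂ) *
          ∫ t in {y : F | y = 0 ∨ 0 ≤ ord y}, ψ (t ^ 2 / (4 * a * δ ^ 2)) ∂μ) :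
    (∫ t in {x : F | x ≠ 0 ∧ ord x = 0}, α (t / δ) ∂μ =
        ((q ^ (-(e : ℝ) / 2) : ℝ) : ℂ) * (1 - (q : ℂ)⁻¹)) ∧
    (∫ t in {x : F | x ≠ 0 ∧ ord x = 0}, α (ϖ * t / δ) ∂μ = 0) :=
  statement_5_general p F ord hmul hult q hq μ hμtrans hμball hmeasball δ hδ ψ hψadd hψtriv
    hψnontriv ϖ hϖ0 hϖ e he α hα
end

section
/- Let $F$ be a finite extension of $\mathbb{Q}_p$, $\psi$ an additive character of conductor $\mathfrak{d}^{-1} = (\boldsymbol\delta^{-1})$, Haar measure with $\mathrm{Vol}(\mathfrak{o}) = 1$, residue field of order $q$, and $e = \mathrm{ord}(2)$. Suppose $\lambda, \mu \in \mathfrak{p}^{-e}$ with $\lambda - \mu \notin \mathfrak{o}$, and let $z \in \mathfrak{o}^\times$. Then $\int_{\mathfrak{o}} \psi\big(-(s - \lambda + \mu)^2/(z\boldsymbol\delta)\big)\, ds = \psi\big(-(\lambda-\mu)^2/(z\boldsymbol\delta)\big) \ne 0$. -/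
open MeasureTheory

/- Writing `t = λ - μ`, one has `-(s - t)² = s (2t - s) - t²`. Since `ord 2 = e` and
`t ∈ 𝔭^{-e}`, `2t ∈ 𝔬`, so for `s ∈ 𝔬` the term `s (2t - s) / (zδ)` lies in `𝔡⁻¹`, where `ψ`
is trivial. The integrand is therefore the constant `ψ(-t²/(zδ))` on `𝔬`, which has volume `1`,
and that constant has absolute value `1`. -/

section Valuation

variable {F : Type*} [Field F] {ord : F → ℤ}

/-- `x ∈ 𝔭^n`; `0` is listed separately because `ord 0` is a junk value. -/
def OrdAtLeast (ord : F → ℤ) (n : ℤ) (x : F) : Prop := x = 0 ∨ n ≤ ord x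

theorem OrdAtLeast.zero (n : ℤ) : OrdAtLeast ord n 0 := Or.inl rfl

theorem OrdAtLeast.of_ord_eq {n : ℤ} {x : F} (h : ord x = n) : OrdAtLeast ord n x :=
  Or.inr h.ge

theorem OrdAtLeast.mul (hmul : ∀ x y : F, x ≠ 0 → y ≠ 0 → ord (x * y) = ord x + ord y)
    {n k : ℤ} {x y : F} (hx : OrdAtLeast ord n x) (hy : OrdAtLeast ord k y) :
    OrdAtLeast ord (n + k) (x * y) := by
  by_cases hx0 : x = 0
  · simp [hx0, OrdAtLeast.zero]
  by_cases hy0 : y = 0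
  · simp [hy0, OrdAtLeast.zero]
  rw [OrdAtLeast, hmul x y hx0 hy0]
  exact Or.inr (add_le_add (hx.resolve_left hx0) (hy.resolve_left hy0))

theorem OrdAtLeast.add
    (hult : ∀ x y : F, x ≠ 0 → y ≠ 0 → x + y ≠ 0 → min (ord x) (ord y) ≤ ord (x + y))
    {n : ℤ} {x y : F} (hx : OrdAtLeast ord n x) (hy : OrdAtLeast ord n y) :
    OrdAtLeast ord n (x + y) := by
  by_cases hx0 : x = 0
  · simpa [hx0] using hy
  by_cases hy0 : y = 0
  · simpa [hy0] using hx
  by_cases hxy : x + y = 0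
  · exact Or.inl hxy
  exact Or.inr <|
    (le_min (hx.resolve_left hx0) (hy.resolve_left hy0)).trans (hult x y hx0 hy0 hxy)

theorem ord_one_of_map_mul (hmul : ∀ x y : F, x ≠ 0 → y ≠ 0 → ord (x * y) = ord x + ord y) :
    ord 1 = 0 := by
  have := hmul 1 1 one_ne_zero one_ne_zero
  rw [mul_one] at this
  omega

theorem ord_inv_of_map_mul (hmul : ∀ x y : F, x ≠ 0 → y ≠ 0 → ord (x * y) = ord x + ord y)
    {x : F} (hx : x ≠ 0) : ord x⁻¹ = -ord x := by
  have := hmul x x⁻¹ hx (inv_ne_zero hx)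
  rw [mul_inv_cancel₀ hx, ord_one_of_map_mul hmul] at this
  omega

theorem ord_neg_one_of_map_mul (hmul : ∀ x y : F, x ≠ 0 → y ≠ 0 → ord (x * y) = ord x + ord y) :
    ord (-1 : F) = 0 := by
  have := hmul (-1) (-1) (neg_ne_zero.2 one_ne_zero) (neg_ne_zero.2 one_ne_zero)
  rw [neg_one_mul, neg_neg, ord_one_of_map_mul hmul] at this
  omega

theorem OrdAtLeast.neg (hmul : ∀ x y : F, x ≠ 0 → y ≠ 0 → ord (x * y) = ord x + ord y)
    {n : ℤ} {x : F} (hx : OrdAtLeast ord n x) : OrdAtLeast ord n (-x) := by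
  simpa [neg_one_mul] using
    (OrdAtLeast.of_ord_eq (ord_neg_one_of_map_mul hmul)).mul hmul hx

theorem OrdAtLeast.sub (hmul : ∀ x y : F, x ≠ 0 → y ≠ 0 → ord (x * y) = ord x + ord y)
    (hult : ∀ x y : F, x ≠ 0 → y ≠ 0 → x + y ≠ 0 → min (ord x) (ord y) ≤ ord (x + y))
    {n : ℤ} {x y : F} (hx : OrdAtLeast ord n x) (hy : OrdAtLeast ord n y) :
    OrdAtLeast ord n (x - y) := by
  simpa [sub_eq_add_neg] using hx.add hult (hy.neg hmul)

end Valuation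

theorem setIntegral_eq_of_eqOn_const {X E : Type*} [MeasurableSpace X]
    [NormedAddCommGroup E] [NormedSpace ℝ E] [CompleteSpace E] {μ : Measure X} {s : Set X}
    (hs : MeasurableSet s) (hμs : μ s = 1) {f : X → E} {c : E}
    (hf : Set.EqOn f (fun _ ↦ c) s) : ∫ x in s, f x ∂μ = c := by
  rw [setIntegral_congr_fun hs hf, setIntegral_const, measureReal_def, hμs]
  simp

theorem statement_16_general
    (F : Type*) [Field F]
    [MeasurableSpace F]
    (ord : F → ℤ)
    (hmul : ∀ x y : F, x ≠ 0 → y ≠ 0 → ord (x * y) = ord x + ord y)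
    (hult : ∀ x y : F, x ≠ 0 → y ≠ 0 → x + y ≠ 0 → min (ord x) (ord y) ≤ ord (x + y))
    (q : ℝ)
    (μ : Measure F)
    (hμball : ∀ n : ℤ, μ {x : F | x = 0 ∨ n ≤ ord x} = ENNReal.ofReal (q ^ (-n)))
    (hmeasball : ∀ n : ℤ, MeasurableSet {x : F | x = 0 ∨ n ≤ ord x})
    (δ : F) (hδ : δ ≠ 0)
    (ψ : F → ℂ)
    (hψadd : ∀ x y : F, ψ (x + y) = ψ x * ψ y)
    (hψnorm : ∀ x : F, ‖ψ x‖ = 1)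
    (hψtriv : ∀ x : F, (x = 0 ∨ -(ord δ) ≤ ord x) → ψ x = 1)
    (e : ℕ) (he : (e : ℤ) = ord 2)
    -- `λ, μ ∈ 𝔭^{-e}` with `λ - μ ∉ 𝔬`:
    (l m : F)
    (hl : l = 0 ∨ -(e : ℤ) ≤ ord l) (hm : m = 0 ∨ -(e : ℤ) ≤ ord m)
    -- `z ∈ 𝔬^×`:
    (z : F) (hz : z ≠ 0) (hz0 : ord z = 0) :
    (∫ s in {y : F | y = 0 ∨ 0 ≤ ord y},
        ψ (-(s - l + m) ^ 2 / (z * δ)) ∂μ) = ψ (-(l - m) ^ 2 / (z * δ)) ∧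
    ψ (-(l - m) ^ 2 / (z * δ)) ≠ 0 := by
  have h2lm : OrdAtLeast ord 0 (2 * (l - m)) := by
    simpa using (OrdAtLeast.of_ord_eq he.symm).mul hmul
      (OrdAtLeast.sub hmul hult (n := -e) hl hm)
  have hzδ : OrdAtLeast ord (-ord δ) (z * δ)⁻¹ :=
    .of_ord_eq (by rw [ord_inv_of_map_mul hmul (mul_ne_zero hz hδ), hmul z δ hz hδ, hz0]; ring)
  have hconst : Set.EqOn (fun s ↦ ψ (-(s - l + m) ^ 2 / (z * δ)))
      (fun _ ↦ ψ (-(l - m) ^ 2 / (z * δ))) {y : F | y = 0 ∨ 0 ≤ ord y} := by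
    intro s (hs : OrdAtLeast ord 0 s)
    have hcross : OrdAtLeast ord (-ord δ) (s * (2 * (l - m) - s) * (z * δ)⁻¹) := by
      simpa only [zero_add] using (hs.mul hmul (h2lm.sub hmul hult hs)).mul hmul hzδ
    calc ψ (-(s - l + m) ^ 2 / (z * δ))
        = ψ (s * (2 * (l - m) - s) * (z * δ)⁻¹ + -(l - m) ^ 2 / (z * δ)) := by
          congr 1; field_simp; ring
      _ = ψ (-(l - m) ^ 2 / (z * δ)) := by rw [hψadd, hψtriv _ hcross, one_mul]
  refine ⟨setIntegral_eq_of_eqOn_const (hmeasball 0) (by simpa using hμball 0) hconst, ?_⟩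
  exact norm_ne_zero_iff.1 (by rw [hψnorm]; exact one_ne_zero)

theorem statement_16
    (p : ℕ) [Fact p.Prime]
    (F : Type*) [Field F] [Algebra ℚ_[p] F] [FiniteDimensional ℚ_[p] F]
    [MeasurableSpace F]
    (ord : F → ℤ)
    (hmul : ∀ x y : F, x ≠ 0 → y ≠ 0 → ord (x * y) = ord x + ord y)
    (hult : ∀ x y : F, x ≠ 0 → y ≠ 0 → x + y ≠ 0 → min (ord x) (ord y) ≤ ord (x + y))
    (hsurj : Function.Surjective ord)
    (hcomp : 0 < ord (algebraMap ℚ_[p] F p))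
    (q : ℝ) (hq : 1 < q)
    (μ : Measure F)
    (hμtrans : ∀ (a : F) (s : Set F), MeasurableSet s → μ ((a + ·) ⁻¹' s) = μ s)
    (hμball : ∀ n : ℤ, μ {x : F | x = 0 ∨ n ≤ ord x} = ENNReal.ofReal (q ^ (-n)))
    (hmeasball : ∀ n : ℤ, MeasurableSet {x : F | x = 0 ∨ n ≤ ord x})
    (δ : F) (hδ : δ ≠ 0)
    (ψ : F → ℂ) (hψmeas : Measurable ψ)
    (hψadd : ∀ x y : F, ψ (x + y) = ψ x * ψ y)
    (hψnorm : ∀ x : F, ‖ψ x‖ = 1)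
    (hψtriv : ∀ x : F, (x = 0 ∨ -(ord δ) ≤ ord x) → ψ x = 1)
    (hψnontriv : ∃ x : F, x ≠ 0 ∧ ord x = -(ord δ) - 1 ∧ ψ x ≠ 1)
    (e : ℕ) (he : (e : ℤ) = ord 2)
    -- `λ, μ ∈ 𝔭^{-e}` with `λ - μ ∉ 𝔬`:
    (l m : F)
    (hl : l = 0 ∨ -(e : ℤ) ≤ ord l) (hm : m = 0 ∨ -(e : ℤ) ≤ ord m)
    (hlm : l - m ≠ 0 ∧ ord (l - m) < 0)
    -- `z ∈ 𝔬^×`: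
    (z : F) (hz : z ≠ 0) (hz0 : ord z = 0) :
    (∫ s in {y : F | y = 0 ∨ 0 ≤ ord y},
        ψ (-(s - l + m) ^ 2 / (z * δ)) ∂μ) = ψ (-(l - m) ^ 2 / (z * δ)) ∧
    ψ (-(l - m) ^ 2 / (z * δ)) ≠ 0 :=
  statement_16_general F ord hmul hult q μ hμball hmeasball δ hδ ψ hψadd hψnorm hψtriv e he l m hl
    hm z hz hz0
end
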